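/- The matrix W₅ with rows (1,1,1,1,0), (1,a,ā,0,1), (1,ā,0,a,ā), (1,0,a,ā,a), (0,1,ā,a,a), where a = e^{2πi/3}, is a unit weighing matrix of order 5 and weight 4, i.e., W₅W₅* = 4I₅. -/
import Mathlib


open Matrix

noncomputable def a : ℂ := Complex.exp (2 * Real.pi * Complex.I / 3)

noncomputable def abar : ℂ := starRingEnd ℂ a

/-- The unique (up to equivalence) unit weighing matrix `UW(5,4)`. -/
noncomputable def W₅ : Matrix (Fin 5) (Fin 5) ℂ :=
  !![1, 1, 1, 1, 0;
     1, a, abar, 0, 1;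
     1, abar, 0, a, abar;
     1, 0, a, abar, a;
     0, 1, abar, a, a]

lemma a_cube : a ^ 3 = 1 := by
  rw [a, ← Complex.exp_nat_mul]
  rw [show ((3 : ℕ) : ℂ) * (2 * Real.pi * Complex.I / 3) = 2 * Real.pi * Complex.I by
    push_cast; ring]
  exact Complex.exp_two_pi_mul_I

lemma a_ne_one : a ≠ 1 := by
  have h := Complex.isPrimitiveRoot_exp 3 (by norm_num)
  have e : a = Complex.exp (2 * Real.pi * Complex.I / (3 : ℕ)) := by
    rw [a]; norm_num
  rw [e]
  exact h.ne_one (by norm_num)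

lemma a_quad : a ^ 2 + a + 1 = 0 := by
  have h : (a - 1) * (a ^ 2 + a + 1) = a ^ 3 - 1 := by ring
  rw [a_cube, sub_self] at h
  rcases mul_eq_zero.mp h with h' | h'
  · exact absurd (sub_eq_zero.mp h') a_ne_one
  · exact h'

lemma abar_mul : abar * a = 1 := by
  rw [abar, a, ← Complex.exp_conj, ← Complex.exp_add]
  rw [show (starRingEnd ℂ) (2 * Real.pi * Complex.I / 3) + 2 * Real.pi * Complex.I / 3 = 0 by
    simp [map_div₀, Complex.conj_ofReal, map_ofNat]; ring]
  exact Complex.exp_zero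

lemma abar_eq : abar = -1 - a := by
  have hq := a_quad
  have hm := abar_mul
  have ha0 : a ≠ 0 := by
    intro h; rw [h, mul_zero] at hm; exact one_ne_zero hm.symm
  have : abar * a = (-1 - a) * a := by
    rw [hm]; linear_combination hq
  exact mul_right_cancel₀ ha0 this

theorem stmt_18 : W₅ * W₅ᴴ = (4 : ℂ) • 1 := by
  have hq : a ^ 2 + a + 1 = 0 := a_quad
  have hb : abar = -1 - a := abar_eq
  have hs : starRingEnd ℂ abar = a := by rw [abar]; exact Complex.conj_conj a
  have hs' : starRingEnd ℂ a = abar := rfl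
  ext i j
  fin_cases i <;> fin_cases j <;>
    simp [W₅, Matrix.mul_apply, Fin.sum_univ_five, Matrix.conjTranspose_apply, hs, hs',
      Matrix.one_apply]
  all_goals try rw [hb]
  all_goals first
    | ring1
    | linear_combination hq
    | linear_combination -hq
    | linear_combination (2 : ℂ) * hq
    | linear_combination (-2 : ℂ) * hq
    | linear_combination (3 : ℂ) * hq
    | linear_combination (-3 : ℂ) * hq
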